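/- arXiv:2509.20606 — 2 statements merged into one kernel-verified Lean document; each statement's English description precedes it below -/
import Mathlib

section
/- Let k be a field, and let A : Fin n → (Fin (d+1) → ℤ) be a finite point configuration (the columns of an integer matrix). Let φ* : MvPolynomial (Fin n) k →ₐ[k] AddMonoidAlgebra k (Fin (d+1) → ℤ) be the k-algebra homomorphism sending the variable X_i to the Laurent monomial with exponent vector A i (i.e. to AddMonoidAlgebra.single (A i) 1). Then the kernel of φ* equals the ideal generated by the binomials X^u − X^v, where u, v : Fin n →₀ ℕ range over exponent vectors satisfying ∑_i u_i • A i = ∑_i v_i • A i (here X^u denotes the monomial MvPolynomial.monomial u 1). -/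
/-!
The map `X i ↦ y ^ A i` is `mapDomain` along the degree map `u ↦ ∑ i, u i • A i`, so a polynomial
lies in its kernel iff its coefficients sum to zero on every fibre of the degree map. If `r` picks
one exponent in each fibre, such an `x` satisfies `mapDomain r x = 0`, hence
`x = x - mapDomain r x = ∑ a, x a • (X ^ a - X ^ r a)`, a combination of binomials.
-/

open Function

namespace AddMonoidAlgebra

variable {R M N O : Type*} [Ring R]

theorem mapDomain_comp (f : N → O) (g : M → N) (x : R[M]) :
    mapDomain (f ∘ g) x = mapDomain f (mapDomain g x) := by
  ext; simp [Finsupp.mapDomain_comp]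

theorem sub_mapDomain_mem_span (g : M → N) {r : M → M} (hr : ∀ a, g (r a) = g a) (x : R[M]) :
    x - mapDomain r x ∈
      Submodule.span R {y : R[M] | ∃ a b, g a = g b ∧ y = single a 1 - single b 1} := by
  induction x using induction_linear with
  | zero => simp
  | add x y hx hy =>
    rw [mapDomain_add, add_sub_add_comm]
    exact Submodule.add_mem _ hx hy
  | single a c =>
    have hsingle : single a c - single (r a) c = c • (single a 1 - single (r a) 1 : R[M]) := by
      simp [smul_sub, smul_single]
    rw [mapDomain_single, hsingle]
    exact Submodule.smul_mem _ c (Submodule.subset_span ⟨a, r a, (hr a).symm, rfl⟩)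

theorem mem_span_of_mapDomain_eq_zero (g : M → N) {x : R[M]} (hx : mapDomain g x = 0) :
    x ∈ Submodule.span R {y : R[M] | ∃ a b, g a = g b ∧ y = single a 1 - single b 1} := by
  classical
  obtain hM | hM := isEmpty_or_nonempty M
  · rw [coeff_injective (Subsingleton.elim x.coeff (0 : R[M]).coeff)]
    exact zero_mem _
  have hr : ∀ a, g (invFun g (g a)) = g a := fun a => invFun_eq ⟨a, rfl⟩
  have hx' : mapDomain (invFun g ∘ g) x = 0 := by rw [mapDomain_comp, hx, mapDomain_zero]
  simpa [hx'] using sub_mapDomain_mem_span g (r := invFun g ∘ g) hr x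

theorem ker_mapDomainRingHom [AddMonoid M] [AddMonoid N] (g : M →+ N) :
    RingHom.ker (mapDomainRingHom R g) =
      Ideal.span {x : R[M] | ∃ a b, g a = g b ∧ x = single a 1 - single b 1} := by
  refine le_antisymm (fun x hx => ?_) (Ideal.span_le.mpr ?_)
  · exact Submodule.span_le_restrictScalars R _ _
      (mem_span_of_mapDomain_eq_zero g (RingHom.mem_ker.mp hx))
  · rintro _ ⟨a, b, hab, rfl⟩
    rw [SetLike.mem_coe, RingHom.mem_ker, map_sub]
    simp [hab]

end AddMonoidAlgebra

open AddMonoidAlgebra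

theorem aeval_single_one_eq_mapDomainAlgHom {σ R M : Type*} [CommSemiring R] [AddCommMonoid M]
    (A : σ → M) :
    MvPolynomial.aeval (fun i => single (A i) (1 : R)) =
      mapDomainAlgHom R R (Finsupp.linearCombination ℕ A).toAddMonoidHom := by
  refine MvPolynomial.algHom_ext fun i => ?_
  rw [MvPolynomial.aeval_X, mapDomainAlgHom_apply, MvPolynomial.X,
    ← MvPolynomial.single_eq_monomial, mapDomain_single]
  simp

/-- The toric ideal of a point configuration `A : Fin n → (Fin (d+1) → ℤ)`, i.e. the kernel of
the `k`-algebra map `k[x_1,…,x_n] → k[y^{±}]` sending `X i` to the Laurent monomial `y^{A i}`,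
equals the binomial ideal `⟨X^u − X^v : A u = A v⟩`. -/
theorem toric_ideal_eq_binomial_span (k : Type*) [Field k] (n d : ℕ)
    (A : Fin n → (Fin (d + 1) → ℤ)) :
    RingHom.ker (MvPolynomial.aeval
        (fun i : Fin n => AddMonoidAlgebra.single (A i) (1 : k)) :
      MvPolynomial (Fin n) k →ₐ[k] AddMonoidAlgebra k (Fin (d + 1) → ℤ)) =
    Ideal.span {f : MvPolynomial (Fin n) k |
      ∃ u v : Fin n →₀ ℕ,
        (∑ i, u i • A i) = (∑ i, v i • A i) ∧
        f = MvPolynomial.monomial u (1 : k) - MvPolynomial.monomial v (1 : k)} := by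
  rw [aeval_single_one_eq_mapDomainAlgHom]
  convert ker_mapDomainRingHom (R := k) (Finsupp.linearCombination ℕ A).toAddMonoidHom using 4
  · rfl
  · simp [Finsupp.linearCombination_apply, Finsupp.sum_fintype, MvPolynomial.single_eq_monomial]
end

section
/- Let k be a field and let Δ be a simplicial complex on the vertex set Fin n, i.e. a nonempty finite family of finite subsets of Fin n that is closed under taking subsets. In S = MvPolynomial (Fin n) k, the Stanley–Reisner ideal I_Δ, generated by the squarefree monomials ∏_{i ∈ τ} X_i over all finite subsets τ ⊆ Fin n with τ ∉ Δ, equals the intersection ⋂_{σ ∈ Δ} ⟨X_i : i ∈ (Fin n) \ σ⟩ of the monomial prime ideals generated by the variables not belonging to a face σ of Δ. -/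
/-!
A polynomial lies in an ideal spanned by monomials iff every monomial of its support does. The
monomial `x^m` is divisible by some `x^τ` with `τ ∉ Δ` iff `supp m` contains a non-face, which for
a complex closed under subsets means `supp m ∉ Δ`. It lies in `⟨X i : i ∉ σ⟩` iff `supp m ⊈ σ`,
and this holds for every face `σ` iff, again, `supp m ∉ Δ`.
-/

theorem Finsupp.sum_single_one_le_iff {ι : Type*} (τ : Finset ι) (m : ι →₀ ℕ) :
    ∑ i ∈ τ, Finsupp.single i 1 ≤ m ↔ τ ⊆ m.support := by
  classical
  simp only [Finsupp.le_def, Finsupp.finsetSum_apply, Finsupp.single_apply,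
    Finset.sum_ite_eq', Finset.subset_iff, Finsupp.mem_support_iff]
  refine ⟨fun h i hi => ?_, fun h i => ?_⟩
  · simpa [hi, Nat.one_le_iff_ne_zero] using h i
  · split_ifs with hi
    · exact Nat.one_le_iff_ne_zero.2 (h hi)
    · exact Nat.zero_le _

namespace MvPolynomial

variable {σ R : Type*} [CommSemiring R]

theorem prod_X_eq_monomial (τ : Finset σ) :
    ∏ i ∈ τ, (X i : MvPolynomial σ R) = monomial (∑ i ∈ τ, Finsupp.single i 1) 1 := by
  rw [monomial_sum_one]; rfl

theorem mem_ideal_span_prod_X_iff {p : Finset σ → Prop} {f : MvPolynomial σ R} :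
    f ∈ Ideal.span {g | ∃ τ, p τ ∧ g = ∏ i ∈ τ, X i} ↔
      ∀ m ∈ f.support, ∃ τ, p τ ∧ τ ⊆ m.support := by
  have hgen : {g : MvPolynomial σ R | ∃ τ, p τ ∧ g = ∏ i ∈ τ, X i} =
      (fun d => monomial d 1) '' ((fun τ => ∑ i ∈ τ, Finsupp.single i 1) '' {τ | p τ}) := by
    rw [Set.image_image]
    ext g
    simp [prod_X_eq_monomial, eq_comm]
  simp [hgen, mem_ideal_span_monomial_image, Finsupp.sum_single_one_le_iff]

end MvPolynomial

theorem IsLowerSet.exists_notMem_le_iff {α : Type*} [Preorder α] {S : Set α} (hS : IsLowerSet S)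
    {a : α} : (∃ b, b ∉ S ∧ b ≤ a) ↔ a ∉ S :=
  ⟨fun ⟨_, hb, hba⟩ ha => hb (hS hba ha), fun ha => ⟨a, ha, le_rfl⟩⟩

theorem IsLowerSet.forall_mem_not_le_iff {α : Type*} [Preorder α] {S : Set α} (hS : IsLowerSet S)
    {a : α} : (∀ c ∈ S, ¬a ≤ c) ↔ a ∉ S :=
  ⟨fun h ha => h a ha le_rfl, fun ha _ hc hac => ha (hS hac hc)⟩

open MvPolynomial in
theorem stanleyReisner_ideal_eq_inter_monomial_primes_general (k : Type*) [Field k] (n : ℕ)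
    (Δ : Finset (Finset (Fin n)))
    (hdown : ∀ σ ∈ Δ, ∀ τ ⊆ σ, τ ∈ Δ) :
    Ideal.span {f : MvPolynomial (Fin n) k |
        ∃ τ : Finset (Fin n), τ ∉ Δ ∧ f = ∏ i ∈ τ, X i} =
      ⨅ σ ∈ Δ, Ideal.span (X '' {i : Fin n | i ∉ σ}) := by
  have hΔ : IsLowerSet (Δ : Set (Finset (Fin n))) := fun _ _ hle h => hdown _ h _ hle
  have hvar (σ : Finset (Fin n)) (m : Fin n →₀ ℕ) :
      (∃ i ∈ {i | i ∉ σ}, m i ≠ 0) ↔ ¬m.support ⊆ σ := by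
    simp [Finset.not_subset, and_comm]
  ext f
  simp only [mem_ideal_span_prod_X_iff, Ideal.mem_iInf, mem_ideal_span_X_image, hvar]
  refine ⟨fun h σ hσ m hm => ?_, fun h m hm => ?_⟩
  · exact hΔ.forall_mem_not_le_iff.2 (hΔ.exists_notMem_le_iff.1 (h m hm)) σ hσ
  · exact hΔ.exists_notMem_le_iff.2 (hΔ.forall_mem_not_le_iff.1 fun σ hσ => h σ hσ m hm)

open MvPolynomial in
/-- For a simplicial complex `Δ` on the vertex set `Fin n` (a nonempty family of finite subsets
of `Fin n` closed under taking subsets), the Stanley–Reisner ideal, generated by the squarefree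
monomials `∏_{i ∈ τ} X i` over the non-faces `τ ∉ Δ`, equals the intersection over the faces
`σ ∈ Δ` of the monomial prime ideals generated by the variables not in `σ`. -/
theorem stanleyReisner_ideal_eq_inter_monomial_primes (k : Type*) [Field k] (n : ℕ)
    (Δ : Finset (Finset (Fin n))) (hne : Δ.Nonempty)
    (hdown : ∀ σ ∈ Δ, ∀ τ ⊆ σ, τ ∈ Δ) :
    Ideal.span {f : MvPolynomial (Fin n) k |
        ∃ τ : Finset (Fin n), τ ∉ Δ ∧ f = ∏ i ∈ τ, X i} =
      ⨅ σ ∈ Δ, Ideal.span (X '' {i : Fin n | i ∉ σ}) :=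
  stanleyReisner_ideal_eq_inter_monomial_primes_general k n Δ hdown
end
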